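/- Decomposing the per-tile join R_T ⋈ S_T into the 9 mini-joins {(A,A),(A,B),(A,C),(A,D),(B,A),(B,C),(C,A),(C,B),(D,A)} between classes of R_T and S_T reports every intersecting pair (r,s) assigned to T whose reference point lies in T, exactly once; the remaining 7 class combinations contain no pair whose reference point lies in T. -/
import Mathlib


structure Rect where
  xl : ℝ
  xu : ℝ
  yl : ℝ
  yu : ℝ

inductive Cls
  | A | B | C | D
deriving DecidableEq

/-- The class of a rectangle q with respect to tile T. -/
noncomputable def cls (T q : Rect) : Cls :=
  if T.xl ≤ q.xl then (if T.yl ≤ q.yl then .A else .B)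
  else (if T.yl ≤ q.yl then .C else .D)

/-- The 9 evaluated mini-joins between classes of R_T and S_T. -/
def nine : List (Cls × Cls) :=
  [(.A,.A),(.A,.B),(.A,.C),(.A,.D),(.B,.A),(.B,.C),(.C,.A),(.C,.B),(.D,.A)]

/-- The 9 mini-joins report exactly the intersecting pairs assigned to T whose
reference point lies in (half-open) T, each exactly once (the 9 combinations are
pairwise distinct and the class pair of (r,s) is unique); the remaining 7 class
combinations contain no pair whose reference point lies in T. -/
theorem stmt14 (T r s : Rect)
    (hTx : T.xl < T.xu) (hTy : T.yl < T.yu)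
    (hrv : r.xl ≤ r.xu ∧ r.yl ≤ r.yu) (hsv : s.xl ≤ s.xu ∧ s.yl ≤ s.yu)
    -- r and s are assigned to the half-open tile T
    (hrT : r.xl < T.xu ∧ T.xl ≤ r.xu ∧ r.yl < T.yu ∧ T.yl ≤ r.yu)
    (hsT : s.xl < T.xu ∧ T.xl ≤ s.xu ∧ s.yl < T.yu ∧ T.yl ≤ s.yu)
    -- r intersects s
    (hrs : r.xl ≤ s.xu ∧ s.xl ≤ r.xu ∧ r.yl ≤ s.yu ∧ s.yl ≤ r.yu) :
    ((T.xl ≤ max r.xl s.xl ∧ max r.xl s.xl < T.xu ∧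
      T.yl ≤ max r.yl s.yl ∧ max r.yl s.yl < T.yu) ↔
      (cls T r, cls T s) ∈ nine) ∧
    nine.Nodup := by
  refine ⟨?_, by decide⟩
  have hx : max r.xl s.xl < T.xu := max_lt hrT.1 hsT.1
  have hy : max r.yl s.yl < T.yu := max_lt hrT.2.2.1 hsT.2.2.1
  simp only [hx, hy, and_true, true_and, le_max_iff, cls, nine]
  split_ifs <;> simp_all <;> tauto
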